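/- arXiv:0704.1702 — 4 statements merged into one kernel-verified Lean document; each statement's English description precedes it below -/
import Mathlib

section
/- Let K be a positive rational number and B a finite multiset of baskets. If P_2(K, B), P_3(K, B), P_4(K, B), P_5(K, B) are all integers and P_5(K, B) ≤ 4, then P_2(K, B) = 1, P_3(K, B) = 2, P_4(K, B) = 3 and P_5(K, B) = 4. -/
/-!
Every correction term `l_Q(m)` is a sum of nonnegative terms over `1 ≤ j ≤ m - 1`, so it grows
with `m`, while the leading term grows by `m² K / 2` from `m` to `m + 1`. Hence for `K > 0` the
virtual plurigenera satisfy `0 = P_1 < P_2 < P_3 < P_4 < P_5`; four distinct positive integers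
not exceeding `4` must be `1, 2, 3, 4`.
-/

/-- A basket `(b, r)` with `0 < b < r` and `gcd(b, r) = 1`. -/
structure Basket where
  b : ℕ
  r : ℕ
  b_pos : 0 < b
  b_lt_r : b < r
  coprime : Nat.gcd b r = 1

/-- Reid's correction term `l_Q(m)` of a basket `Q` for `m ≥ 2`. -/
def Basket.corr (Q : Basket) (m : ℕ) : ℚ :=
  ∑ j ∈ Finset.Icc 1 (m - 1),
    ((Q.b * j % Q.r : ℕ) : ℚ) * ((Q.r : ℚ) - ((Q.b * j % Q.r : ℕ) : ℚ)) / (2 * (Q.r : ℚ))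

/-- The virtual `m`-th plurigenus `P_m(K, B)` for `m ≥ 2`. -/
def plurigenus (K : ℚ) (B : Multiset Basket) (m : ℕ) : ℚ :=
  (1 / 12 : ℚ) * m * (m - 1) * (2 * m - 1) * K + (B.map (fun Q => Q.corr m)).sum

/-- `b' = b` if `2b ≤ r`, and `b' = r - b` otherwise. -/
def Basket.b' (Q : Basket) : ℕ := if 2 * Q.b ≤ Q.r then Q.b else Q.r - Q.b

/-- The basket `(1, 2)`. -/
def B12 : Basket := ⟨1, 2, by decide, by decide, by decide⟩

namespace Basket

lemma r_pos (Q : Basket) : 0 < Q.r :=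
  Q.b_pos.trans Q.b_lt_r

lemma corr_summand_nonneg (Q : Basket) (j : ℕ) :
    0 ≤ ((Q.b * j % Q.r : ℕ) : ℚ) * ((Q.r : ℚ) - ((Q.b * j % Q.r : ℕ) : ℚ)) / (2 * (Q.r : ℚ)) := by
  have hres : ((Q.b * j % Q.r : ℕ) : ℚ) ≤ Q.r := by exact_mod_cast (Nat.mod_lt _ Q.r_pos).le
  have := sub_nonneg.2 hres
  positivity

lemma corr_mono (Q : Basket) : Monotone Q.corr := fun _ _ hmn =>
  Finset.sum_le_sum_of_subset_of_nonneg (Finset.Icc_subset_Icc_right (Nat.sub_le_sub_right hmn 1))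
    fun j _ _ => Q.corr_summand_nonneg j

lemma corr_one (Q : Basket) : Q.corr 1 = 0 := by
  simp [corr]

end Basket

section Plurigenus

variable (K : ℚ) (B : Multiset Basket)

lemma plurigenus_one : plurigenus K B 1 = 0 := by
  simp [plurigenus, Basket.corr_one]

lemma plurigenus_succ_sub (m : ℕ) :
    plurigenus K B (m + 1) - plurigenus K B m =
      m ^ 2 / 2 * K + ((B.map (·.corr (m + 1))).sum - (B.map (·.corr m)).sum) := by
  simp only [plurigenus]
  push_cast
  ring

variable {K}

lemma plurigenus_lt_succ (hK : 0 < K) {m : ℕ} (hm : 1 ≤ m) :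
    plurigenus K B m < plurigenus K B (m + 1) := by
  have hcorr : (B.map (·.corr m)).sum ≤ (B.map (·.corr (m + 1))).sum :=
    Multiset.sum_map_le_sum_map _ _ fun Q _ => Q.corr_mono m.le_succ
  have hlead : 0 < (m : ℚ) ^ 2 / 2 * K := by
    have : (0 : ℚ) < m := by exact_mod_cast hm
    positivity
  linarith [plurigenus_succ_sub K B m]

end Plurigenus

theorem stmt1 (K : ℚ) (hK : 0 < K) (B : Multiset Basket)
    (h2 : ∃ n : ℤ, plurigenus K B 2 = n)
    (h3 : ∃ n : ℤ, plurigenus K B 3 = n)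
    (h4 : ∃ n : ℤ, plurigenus K B 4 = n)
    (h5 : ∃ n : ℤ, plurigenus K B 5 = n)
    (hle : plurigenus K B 5 ≤ 4) :
    plurigenus K B 2 = 1 ∧ plurigenus K B 3 = 2 ∧
      plurigenus K B 4 = 3 ∧ plurigenus K B 5 = 4 := by
  obtain ⟨n₂, e₂⟩ := h2
  obtain ⟨n₃, e₃⟩ := h3
  obtain ⟨n₄, e₄⟩ := h4
  obtain ⟨n₅, e₅⟩ := h5
  have h12 : plurigenus K B 1 < plurigenus K B 2 := plurigenus_lt_succ B hK le_rfl
  have h23 : plurigenus K B 2 < plurigenus K B 3 := plurigenus_lt_succ B hK (by norm_num)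
  have h34 : plurigenus K B 3 < plurigenus K B 4 := plurigenus_lt_succ B hK (by norm_num)
  have h45 : plurigenus K B 4 < plurigenus K B 5 := plurigenus_lt_succ B hK (by norm_num)
  rw [plurigenus_one] at h12
  rw [e₂] at h12 h23
  rw [e₃] at h23 h34
  rw [e₄] at h34 h45
  rw [e₅] at h45 hle
  norm_cast at h12 h23 h34 h45 hle
  obtain ⟨rfl, rfl, rfl, rfl⟩ : n₂ = 1 ∧ n₃ = 2 ∧ n₄ = 3 ∧ n₅ = 4 := by omega
  simp [e₂, e₃, e₄, e₅]
end

section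
/- Let K be a positive rational number and B a finite multiset of baskets such that P_2(K, B) = 1. Then B contains at most 3 baskets (counted with multiplicity). -/
/-!
Only the term `j = 1` enters `l_Q(2) = b(r - b)/(2r)`. Since `b ≥ 1` and `r - b ≥ 1`,
`b(r - b) ≥ b + (r - b) - 1 = r - 1 ≥ r/2`, so every basket contributes at least `1/4` to `P_2`.
With `K > 0` the equation `1 = P_2 = K/2 + Σ_Q l_Q(2)` then forces `#B / 4 < 1`.
-/

namespace Basket

theorem corr_two (Q : Basket) : Q.corr 2 = (Q.b : ℚ) * (Q.r - Q.b) / (2 * Q.r) := by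
  simp [corr, Nat.mod_eq_of_lt Q.b_lt_r]

theorem one_div_four_le_corr_two (Q : Basket) : (1 / 4 : ℚ) ≤ Q.corr 2 := by
  have hb : (1 : ℚ) ≤ Q.b := by exact_mod_cast Q.b_pos
  have hbr : (Q.b : ℚ) + 1 ≤ Q.r := by exact_mod_cast Q.b_lt_r
  rw [corr_two, le_div_iff₀ (by linarith)]
  nlinarith [mul_nonneg (sub_nonneg.2 hb) (by linarith : (0 : ℚ) ≤ Q.r - Q.b - 1)]

end Basket

theorem plurigenus_two (K : ℚ) (B : Multiset Basket) :
    plurigenus K B 2 = K / 2 + (B.map (fun Q => Q.corr 2)).sum := by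
  simp only [plurigenus]
  ring

theorem card_div_four_le_sum_corr_two (B : Multiset Basket) :
    (Multiset.card B : ℚ) / 4 ≤ (B.map (fun Q => Q.corr 2)).sum := by
  have h := Multiset.card_nsmul_le_sum (s := B.map fun Q => Q.corr 2) (a := 1 / 4)
    (by simpa only [Multiset.forall_mem_map_iff] using fun Q _ => Q.one_div_four_le_corr_two)
  rw [Multiset.card_map, nsmul_eq_mul] at h
  linarith

theorem stmt5 (K : ℚ) (hK : 0 < K) (B : Multiset Basket)
    (h2 : plurigenus K B 2 = 1) :
    Multiset.card B ≤ 3 := by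
  have hsum := card_div_four_le_sum_corr_two B
  rw [plurigenus_two] at h2
  have hcard : (Multiset.card B : ℚ) < 4 := by linarith
  exact Nat.le_of_lt_succ (by exact_mod_cast hcard)
end

section
/- Let K be a positive rational number and let B consist of exactly three baskets (1, 2), (b₂, 3), (b₃, 3), such that P_2(K, B) = 1 and P_3(K, B) = 2. Then K = 1/6, P_4(K, B) = 3 and P_5(K, B) = 5. -/
/-! For `r ≤ 3` every nonzero residue `x` modulo `r` satisfies `x (r - x) = r - 1`, and by
coprimality `b j` is divisible by `r` exactly when `j` is. So `l_Q(m)` is `(r - 1) / 2r` times the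
number of `j < m` not divisible by `r`, and `P_m(K, B)` becomes an explicit function of `m` and `K`:
`P_2 = K / 2 + 1/4 + 2/3` forces `K = 1/6`, after which `P_4` and `P_5` are evaluated directly. -/

open Finset

lemma card_filter_not_dvd_Icc_one (n r : ℕ) : #{j ∈ Icc 1 n | ¬ r ∣ j} = n - n / r := by
  have h := card_filter_add_card_filter_not (s := Ioc 0 n) (r ∣ ·)
  rw [show Icc 1 n = Ioc 0 n from Icc_add_one_left_eq_Ioc 0 n]
  rw [Nat.Ioc_filter_dvd_card_eq_div, Nat.card_Ioc] at h
  omega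

lemma Basket.r_pos_s8 (Q : Basket) : 0 < Q.r :=
  Q.b_pos.trans Q.b_lt_r

lemma Basket.dvd_b_mul_iff (Q : Basket) {j : ℕ} : Q.r ∣ Q.b * j ↔ Q.r ∣ j :=
  (Nat.coprime_comm.mp Q.coprime).dvd_mul_left

lemma mul_sub_eq_sub_one_of_lt_of_le_three {x r : ℕ} (hx : 0 < x) (hxr : x < r) (hr : r ≤ 3) :
    (x : ℚ) * (r - x) = r - 1 := by
  interval_cases r <;> interval_cases x <;> norm_num

theorem Basket.corr_eq_of_r_le_three (Q : Basket) (hr : Q.r ≤ 3) (m : ℕ) :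
    Q.corr m = (Q.r - 1) / (2 * Q.r) * (m - 1 - (m - 1) / Q.r : ℕ) := by
  rw [← card_filter_not_dvd_Icc_one, Basket.corr, card_filter, Nat.cast_sum, mul_sum]
  refine sum_congr rfl fun j _ => ?_
  split_ifs with h
  · rw [Nat.mod_eq_zero_of_dvd (dvd_mul_of_dvd_right h _)]
    simp
  · have hres : 0 < Q.b * j % Q.r :=
      Nat.pos_of_ne_zero fun h0 => h (Q.dvd_b_mul_iff.mp (Nat.dvd_of_mod_eq_zero h0))
    rw [mul_sub_eq_sub_one_of_lt_of_le_three hres (Nat.mod_lt _ Q.r_pos_s8) hr]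
    simp

lemma plurigenus_B12_pair_of_r_eq_three (K : ℚ) {Q₂ Q₃ : Basket} (hr₂ : Q₂.r = 3)
    (hr₃ : Q₃.r = 3) (m : ℕ) :
    plurigenus K {B12, Q₂, Q₃} m = m * (m - 1) * (2 * m - 1) / 12 * K +
      (m - 1 - (m - 1) / 2 : ℕ) / 4 + 2 * (m - 1 - (m - 1) / 3 : ℕ) / 3 := by
  simp only [plurigenus, Multiset.insert_eq_cons, Multiset.map_cons, Multiset.map_singleton,
    Multiset.sum_cons, Multiset.sum_singleton]
  rw [B12.corr_eq_of_r_le_three (by decide), Q₂.corr_eq_of_r_le_three hr₂.le,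
    Q₃.corr_eq_of_r_le_three hr₃.le, hr₂, hr₃]
  simp only [B12]
  ring

theorem stmt8_general (K : ℚ) (Q₂ Q₃ : Basket)
    (hr₂ : Q₂.r = 3) (hr₃ : Q₃.r = 3)
    (h2 : plurigenus K {B12, Q₂, Q₃} 2 = 1) :
    K = 1 / 6 ∧ plurigenus K {B12, Q₂, Q₃} 4 = 3 ∧
      plurigenus K {B12, Q₂, Q₃} 5 = 5 := by
  simp only [plurigenus_B12_pair_of_r_eq_three K hr₂ hr₃] at h2 ⊢
  have hK : K = 1 / 6 := by
    norm_num at h2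
    linarith
  subst hK
  norm_num

theorem stmt8 (K : ℚ) (hK : 0 < K) (Q₂ Q₃ : Basket)
    (hr₂ : Q₂.r = 3) (hr₃ : Q₃.r = 3)
    (h2 : plurigenus K {B12, Q₂, Q₃} 2 = 1)
    (h3 : plurigenus K {B12, Q₂, Q₃} 3 = 2) :
    K = 1 / 6 ∧ plurigenus K {B12, Q₂, Q₃} 4 = 3 ∧
      plurigenus K {B12, Q₂, Q₃} 5 = 5 :=
  stmt8_general K Q₂ Q₃ hr₂ hr₃ h2
end

section
/- Let K be a positive rational number and let B consist of exactly three baskets (1, 2), (b₂, 3), (b₃, 4), such that P_2(K, B) = 1 and P_3(K, B) = 2. Then K = 1/12, b₃ ∈ {1, 3}, P_4(K, B) = 3 and P_5(K, B) = 4. -/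
/-!
The correction term `l_Q(m)` only sees the residues `x = b j mod r` through `x (r - x)`, which is
invariant under `b ↦ r - b` (the residue becomes `r - x`, or stays `0`). For `r = 3` and `r = 4`
coprimality leaves `b ∈ {1, r - 1}`, so these baskets have the correction terms of `(1, r)`,
which are explicit numbers. Then `P_2 = K / 2 + 23 / 24` forces `K = 1 / 12`, and `P_4`, `P_5`
are evaluated directly.
-/

lemma mul_mod_mul_sub_mul_mod_reflect {r b : ℕ} (hb : b ≤ r) (j : ℕ) :
    ((b * j % r : ℕ) : ℚ) * (r - (b * j % r : ℕ)) =
      (((r - b) * j % r : ℕ) : ℚ) * (r - ((r - b) * j % r : ℕ)) := by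
  rcases Nat.eq_zero_or_pos r with rfl | hr
  · obtain rfl : b = 0 := by omega
    simp
  obtain ⟨k, hk⟩ : r ∣ b * j % r + (r - b) * j % r := by
    rw [Nat.dvd_iff_mod_eq_zero, ← Nat.add_mod, ← add_mul, Nat.add_sub_cancel' hb,
      Nat.mul_mod_right]
  have hx := Nat.mod_lt (b * j) hr
  have hy := Nat.mod_lt ((r - b) * j) hr
  have hk2 : k < 2 := by nlinarith
  interval_cases k
  · obtain ⟨hx0, hy0⟩ : b * j % r = 0 ∧ (r - b) * j % r = 0 := by omega
    simp [hx0, hy0]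
  · have hsum : b * j % r + (r - b) * j % r = r := by omega
    have hy' : (((r - b) * j % r : ℕ) : ℚ) = r - (b * j % r : ℕ) := by
      rw [eq_sub_iff_add_eq, add_comm]
      exact_mod_cast hsum
    rw [hy']
    ring

lemma Basket.corr_eq_of_b_eq_r_sub_b {Q Q' : Basket} (hr : Q'.r = Q.r)
    (hb : Q'.b = Q.r - Q.b) (m : ℕ) : Q'.corr m = Q.corr m := by
  unfold Basket.corr
  rw [hr, hb]
  exact Finset.sum_congr rfl fun j _ => by rw [mul_mod_mul_sub_mul_mod_reflect Q.b_lt_r.le]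

def B13 : Basket := ⟨1, 3, by decide, by decide, by decide⟩

def B14 : Basket := ⟨1, 4, by decide, by decide, by decide⟩

lemma Basket.corr_eq_B13_corr_of_r_eq_three (Q : Basket) (hr : Q.r = 3) :
    Q.corr = B13.corr := by
  obtain ⟨b, r, hpos, hlt, hcop⟩ := Q
  subst hr
  interval_cases b
  · rfl
  · exact funext (Basket.corr_eq_of_b_eq_r_sub_b (Q := B13) rfl rfl)

lemma Basket.b_eq_one_or_three_of_r_eq_four (Q : Basket) (hr : Q.r = 4) :
    Q.b = 1 ∨ Q.b = 3 := by
  obtain ⟨b, r, hpos, hlt, hcop⟩ := Q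
  subst hr
  interval_cases b
  · exact Or.inl rfl
  · exact absurd hcop (by decide)
  · exact Or.inr rfl

lemma Basket.corr_eq_B14_corr_of_r_eq_four (Q : Basket) (hr : Q.r = 4) :
    Q.corr = B14.corr := by
  obtain hb | hb := Q.b_eq_one_or_three_of_r_eq_four hr
  · obtain ⟨b, r, hpos, hlt, hcop⟩ := Q
    subst hr hb
    rfl
  · exact funext (Basket.corr_eq_of_b_eq_r_sub_b (Q := B14) hr (by rw [hb]; rfl))

lemma B12_corr : B12.corr 2 = 1 / 4 ∧ B12.corr 4 = 1 / 2 ∧ B12.corr 5 = 1 / 2 := by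
  norm_num [Basket.corr, B12, Finset.sum_Icc_succ_top]

lemma B13_corr : B13.corr 2 = 1 / 3 ∧ B13.corr 4 = 2 / 3 ∧ B13.corr 5 = 1 := by
  norm_num [Basket.corr, B13, Finset.sum_Icc_succ_top]

lemma B14_corr : B14.corr 2 = 3 / 8 ∧ B14.corr 4 = 5 / 4 ∧ B14.corr 5 = 5 / 4 := by
  norm_num [Basket.corr, B14, Finset.sum_Icc_succ_top]

lemma plurigenus_insert_insert_singleton (K : ℚ) (Q₁ Q₂ Q₃ : Basket) (m : ℕ) :
    plurigenus K {Q₁, Q₂, Q₃} m =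
      m * (m - 1) * (2 * m - 1) / 12 * K + (Q₁.corr m + Q₂.corr m + Q₃.corr m) := by
  simp only [plurigenus, Multiset.insert_eq_cons, Multiset.map_cons, Multiset.map_singleton,
    Multiset.sum_cons, Multiset.sum_singleton]
  ring

theorem stmt9_general (K : ℚ) (Q₂ Q₃ : Basket)
    (hr₂ : Q₂.r = 3) (hr₃ : Q₃.r = 4)
    (h2 : plurigenus K {B12, Q₂, Q₃} 2 = 1) :
    K = 1 / 12 ∧ (Q₃.b = 1 ∨ Q₃.b = 3) ∧
      plurigenus K {B12, Q₂, Q₃} 4 = 3 ∧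
      plurigenus K {B12, Q₂, Q₃} 5 = 4 := by
  obtain ⟨a2, a4, a5⟩ := B12_corr
  obtain ⟨b2, b4, b5⟩ := B13_corr
  obtain ⟨c2, c4, c5⟩ := B14_corr
  simp only [plurigenus_insert_insert_singleton, Q₂.corr_eq_B13_corr_of_r_eq_three hr₂,
    Q₃.corr_eq_B14_corr_of_r_eq_four hr₃, a2, a4, a5, b2, b4, b5, c2, c4, c5] at h2 ⊢
  have hK : K = 1 / 12 := by linarith
  refine ⟨hK, Q₃.b_eq_one_or_three_of_r_eq_four hr₃, ?_, ?_⟩ <;> rw [hK] <;> norm_num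

theorem stmt9 (K : ℚ) (hK : 0 < K) (Q₂ Q₃ : Basket)
    (hr₂ : Q₂.r = 3) (hr₃ : Q₃.r = 4)
    (h2 : plurigenus K {B12, Q₂, Q₃} 2 = 1)
    (h3 : plurigenus K {B12, Q₂, Q₃} 3 = 2) :
    K = 1 / 12 ∧ (Q₃.b = 1 ∨ Q₃.b = 3) ∧
      plurigenus K {B12, Q₂, Q₃} 4 = 3 ∧
      plurigenus K {B12, Q₂, Q₃} 5 = 4 :=
  stmt9_general K Q₂ Q₃ hr₂ hr₃ h2
end
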